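/- If a function f ∈ ℓ^{4,∞}(Z²) satisfies the monotonicity condition |f(k₁,l₁)| ≤ |f(k₂,l₂)| whenever max{|k₁|,|l₁|} > max{|k₂|,|l₂|}, then with S₁ = {(k,l) ∈ Z² : |k| ≥ |l|} and S₂ = {(k,l) ∈ Z² : |k| < |l|}, there is a constant C (depending only on ‖f‖_{ℓ^{4,∞}}) such that ∑_{l : (k,l)∈S₁} |f(k,l)|² ≤ C for all k and ∑_{k : (k,l)∈S₂} |f(k,l)|² ≤ C for all l. -/

import Mathlib

open scoped ENNReal NNReal Classical

/-!
If `max |k| |l| = n`, monotonicity puts the `(2n - 1)²` points strictly inside the square of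
radius `n` into every level set `{|f| > λ}` with `λ < |f (k, l)|`, so the weak-`ℓ⁴` bound gives
`|f (k, l)|² (2n - 1) ≤ A²`, besides the trivial `|f (k, l)|² ≤ A²`. The part of a row in `S₁` or
of a column in `S₂` consists of at most `2n + 1` points of the ring `max |k| |l| = n`, so its
`ℓ²`-mass is at most `3A²`.
-/

open Finset in
theorem tsum_ite_nnnorm_sq_le {ι E : Type*} [SeminormedAddGroup E] (g : ι → E) (P : ι → Prop)
    [DecidablePred P] (s : Finset ι) (hs : ∀ i, P i → i ∈ s) {b : ℝ}
    (hb : ∀ i, P i → #s * ‖g i‖ ^ 2 ≤ b) :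
    ∑' i, (if P i then (‖g i‖₊ ^ 2 : ℝ≥0∞) else 0) ≤ ENNReal.ofReal b := by
  rw [tsum_eq_sum (s := s) fun i hi => if_neg (mt (hs i) hi)]
  rcases s.eq_empty_or_nonempty with rfl | hne
  · simp
  have hcard : (0 : ℝ) < #s := by exact_mod_cast hne.card_pos
  calc ∑ i ∈ s, (if P i then (‖g i‖₊ ^ 2 : ℝ≥0∞) else 0)
      ≤ ∑ _i ∈ s, ENNReal.ofReal (b / #s) := sum_le_sum fun i _ => by
        split_ifs with h
        · rw [← ENNReal.ofReal_coe_nnreal, ← ENNReal.ofReal_pow (by positivity), coe_nnnorm]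
          exact ENNReal.ofReal_le_ofReal ((le_div_iff₀' hcard).2 (hb i h))
        · exact zero_le
    _ = ENNReal.ofReal b := by
        rw [sum_const, nsmul_eq_mul, ← ENNReal.ofReal_natCast, ← ENNReal.ofReal_mul hcard.le,
          mul_div_cancel₀ _ hcard.ne']

-- Finiteness of the level sets has to be part of the bound: `Set.ncard` is `0` on infinite sets.
def WeakLpBound {α E : Type*} [Norm E] (f : α → E) (q : ℕ) (A : ℝ) : Prop :=
  ∀ lam : ℝ, 0 < lam →
    {p | lam < ‖f p‖}.Finite ∧ lam * ({p | lam < ‖f p‖}.ncard : ℝ) ^ ((q : ℝ)⁻¹) ≤ A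

namespace WeakLpBound

variable {α E : Type*} [SeminormedAddGroup E] {f : α → E} {q : ℕ} {A : ℝ}

theorem nonneg (hf : WeakLpBound f q A) : 0 ≤ A :=
  le_trans (by positivity) (hf 1 one_pos).2

theorem pow_mul_ncard_le (hf : WeakLpBound f q A) (hq : q ≠ 0) {lam : ℝ} (hlam : 0 < lam) :
    lam ^ q * {p | lam < ‖f p‖}.ncard ≤ A ^ q :=
  calc lam ^ q * {p | lam < ‖f p‖}.ncard
      = (lam * ({p | lam < ‖f p‖}.ncard : ℝ) ^ ((q : ℝ)⁻¹)) ^ q := by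
        rw [mul_pow, Real.rpow_inv_natCast_pow (Nat.cast_nonneg _) hq]
    _ ≤ A ^ q := pow_le_pow_left₀ (by positivity) (hf lam hlam).2 q

-- `s` lies in every level set `{‖f‖ > λ}` with `λ < t`; then let `λ → t`.
theorem pow_mul_card_le (hf : WeakLpBound f q A) (hq : q ≠ 0) {t : ℝ} (ht : 0 ≤ t)
    (s : Finset α) (hs : ∀ x ∈ s, t ≤ ‖f x‖) : t ^ q * s.card ≤ A ^ q := by
  rcases ht.eq_or_lt with rfl | htpos
  · rw [zero_pow hq, zero_mul]
    exact pow_nonneg hf.nonneg q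
  have below : ∀ lam ∈ Set.Ioo 0 t, lam ^ q * s.card ≤ A ^ q := by
    rintro lam ⟨hlam, hlamt⟩
    have hsub : (s : Set α) ⊆ {p | lam < ‖f p‖} := fun x hx => hlamt.trans_le (hs x hx)
    calc lam ^ q * s.card ≤ lam ^ q * {p | lam < ‖f p‖}.ncard := by
          gcongr
          rw [← Set.ncard_coe_finset]
          exact_mod_cast Set.ncard_le_ncard hsub (hf lam hlam).1
      _ ≤ A ^ q := hf.pow_mul_ncard_le hq hlam
  exact le_of_tendsto ((Continuous.tendsto (by fun_prop) t).mono_left nhdsWithin_le_nhds)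
    (Filter.eventually_of_mem (Ioo_mem_nhdsLT htpos) below)

theorem norm_sq_le (hf : WeakLpBound f 4 A) (x : α) : ‖f x‖ ^ 2 ≤ A ^ 2 := by
  have h := hf.pow_mul_card_le four_ne_zero (norm_nonneg (f x)) {x} (by simp)
  rw [Finset.card_singleton, Nat.cast_one, mul_one] at h
  exact (pow_le_pow_iff_left₀ (by positivity) (by positivity) two_ne_zero).1 (by
    rw [← pow_mul, ← pow_mul]; exact h)

end WeakLpBound

section MaxNormMonotone

variable {E : Type*} [SeminormedAddGroup E] {f : ℤ × ℤ → E}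

theorem norm_le_of_mem_box
    (hmono : ∀ k₁ l₁ k₂ l₂ : ℤ, max |k₁| |l₁| > max |k₂| |l₂| → ‖f (k₁, l₁)‖ ≤ ‖f (k₂, l₂)‖)
    (k l : ℤ) :
    ∀ x ∈ Finset.Ioo (-max |k| |l|) (max |k| |l|) ×ˢ Finset.Ioo (-max |k| |l|) (max |k| |l|),
      ‖f (k, l)‖ ≤ ‖f x‖ := by
  rintro ⟨a, b⟩ hab
  simp only [Finset.mem_product, Finset.mem_Ioo] at hab
  exact hmono k l a b (max_lt (abs_lt.2 hab.1) (abs_lt.2 hab.2))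

theorem norm_sq_mul_le {A : ℝ} (hf : WeakLpBound f 4 A)
    (hmono : ∀ k₁ l₁ k₂ l₂ : ℤ, max |k₁| |l₁| > max |k₂| |l₂| → ‖f (k₁, l₁)‖ ≤ ‖f (k₂, l₂)‖)
    (k l : ℤ) : ‖f (k, l)‖ ^ 2 * (2 * max |k| |l| - 1 : ℤ) ≤ A ^ 2 := by
  set n := max |k| |l|
  have hbox := hf.pow_mul_card_le four_ne_zero (norm_nonneg _) _ (norm_le_of_mem_box hmono k l)
  rw [Finset.card_product, Int.card_Ioo, Nat.cast_mul] at hbox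
  set c : ℝ := ↑(n - -n - 1).toNat
  have hc : ((2 * n - 1 : ℤ) : ℝ) ≤ c := by
    have h : 2 * n - 1 ≤ (n - -n - 1).toNat := by
      simpa only [sub_neg_eq_add, two_mul] using Int.self_le_toNat (n - -n - 1)
    simpa only [c, Int.cast_natCast] using (Int.cast_le (R := ℝ)).2 h
  calc ‖f (k, l)‖ ^ 2 * (2 * n - 1 : ℤ) ≤ ‖f (k, l)‖ ^ 2 * c := by gcongr
    _ ≤ A ^ 2 := (pow_le_pow_iff_left₀ (by positivity) (by positivity) two_ne_zero).1 (by
        rw [mul_pow, ← pow_mul, ← pow_mul, sq]; exact hbox)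

end MaxNormMonotone

/-- for a max-norm radially decreasing `f ∈ ℓ^{4,∞}(ℤ²)`, the explicit
decomposition `S₁ = {|k| ≥ |l|}`, `S₂ = {|k| < |l|}` has uniformly bounded row/column
`ℓ²`-norms. -/
theorem stmt_5 (f : ℤ × ℤ → ℂ) (A : ℝ)
    (hweak : ∀ lam : ℝ, 0 < lam →
      {p : ℤ × ℤ | lam < ‖f p‖}.Finite ∧
      lam * (({p : ℤ × ℤ | lam < ‖f p‖}.ncard : ℝ) ^ ((1 : ℝ) / 4)) ≤ A)
    (hmono : ∀ k₁ l₁ k₂ l₂ : ℤ, max |k₁| |l₁| > max |k₂| |l₂| → ‖f (k₁, l₁)‖ ≤ ‖f (k₂, l₂)‖) :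
    ∃ C : ℝ≥0,
      (∀ k : ℤ, ∑' l : ℤ, (if |k| ≥ |l| then (‖f (k, l)‖₊ ^ 2 : ℝ≥0∞) else 0) ≤ C) ∧
      (∀ l : ℤ, ∑' k : ℤ, (if |k| < |l| then (‖f (k, l)‖₊ ^ 2 : ℝ≥0∞) else 0) ≤ C) := by
  have hf : WeakLpBound f 4 A := fun lam hlam => by simpa [one_div] using hweak lam hlam
  refine ⟨(3 * A ^ 2).toNNReal, fun k => ?_, fun l => ?_⟩
  · refine tsum_ite_nnnorm_sq_le _ _ (Finset.Icc (-|k|) |k|)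
      (fun l h => Finset.mem_Icc.2 (abs_le.1 h)) fun l h => ?_
    have hdecay := norm_sq_mul_le hf hmono k l
    rw [max_eq_left h] at hdecay
    have hcard : ((Finset.Icc (-|k|) |k|).card : ℤ) = 2 * |k| + 1 := by
      rw [Int.card_Icc, Int.toNat_of_nonneg (by linarith [abs_nonneg k])]; ring
    rw [show ((Finset.Icc (-|k|) |k|).card : ℝ) = 2 * |(k : ℝ)| + 1 by exact_mod_cast hcard]
    push_cast at hdecay
    linarith [hf.norm_sq_le (k, l)]
  · refine tsum_ite_nnnorm_sq_le _ _ (Finset.Ioo (-|l|) |l|)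
      (fun k h => Finset.mem_Ioo.2 (abs_lt.1 h)) fun k h => ?_
    have hdecay := norm_sq_mul_le hf hmono k l
    rw [max_eq_right h.le] at hdecay
    have hcard : ((Finset.Ioo (-|l|) |l|).card : ℤ) = 2 * |l| - 1 := by
      rw [Int.card_Ioo, Int.toNat_of_nonneg (by linarith [abs_nonneg k])]; ring
    rw [show ((Finset.Ioo (-|l|) |l|).card : ℝ) = 2 * |(l : ℝ)| - 1 by exact_mod_cast hcard]
    push_cast at hdecay
    linarith [sq_nonneg A]
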